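/- Let n ≥ 1 and let P₁, P₂, P₃ be real n×n matrices with P₁ symmetric positive definite, P₂ symmetric negative definite, P₃ symmetric such that P₃ − P₂ᵀ P₁⁻¹ P₂ is positive definite and P₃ P₂⁻¹ P₁ − P₂ᵀ is negative definite. Let f : ℝⁿ × ℝⁿ → ℝⁿ be any function and g : ℝⁿ × ℝⁿ → ℝⁿˣⁿ be any function whose values are invertible matrices, and fix a goal x_i ∈ ℝⁿ. Then there exists a continuous function W₃ : ℝⁿ × ℝⁿ → ℝ with W₃(0,0) = 0 and W₃(e,v) > 0 for (e,v) ≠ (0,0), such that for every (p,v) ∈ ℝⁿ × ℝⁿ, writing e = x_i − p, there exists u ∈ ℝⁿ with −eᵀ P₁ v − vᵀ P₂ᵀ v + (eᵀ P₂ + vᵀ P₃)(f(p,v) + g(p,v) u) ≤ −W₃(e,v). -/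
import Mathlib


open Matrix

/-- **Lemma 2 (valid CLF).** Under the stated conditions on the blocks `P₁, P₂, P₃`
of the Lyapunov matrix, there is a continuous positive definite rate function `W₃`
such that at every state `(p, v)` (with error `e = xᵢ - p`) some control input `u`
achieves the CLF decrease condition
`-eᵀP₁v - vᵀP₂ᵀv + (eᵀP₂ + vᵀP₃)(f(p,v) + g(p,v)u) ≤ -W₃(e,v)`. -/
theorem clf_valid (n : ℕ) (hn : 1 ≤ n)
    (P₁ P₂ P₃ : Matrix (Fin n) (Fin n) ℝ)
    (hP₁ : P₁.PosDef)
    (hP₂ : (-P₂).PosDef)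
    (hP₃ : P₃.IsSymm)
    (hSchur : (P₃ - P₂ᵀ * P₁⁻¹ * P₂).PosDef)
    (hmix : ∀ v : Fin n → ℝ, v ≠ 0 → v ⬝ᵥ ((P₃ * P₂⁻¹ * P₁ - P₂ᵀ) *ᵥ v) < 0)
    (f : (Fin n → ℝ) → (Fin n → ℝ) → (Fin n → ℝ))
    (g : (Fin n → ℝ) → (Fin n → ℝ) → Matrix (Fin n) (Fin n) ℝ)
    (hg : ∀ p v, IsUnit (g p v))
    (xi : Fin n → ℝ) :
    ∃ W₃ : (Fin n → ℝ) → (Fin n → ℝ) → ℝ,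
      Continuous (fun ev : (Fin n → ℝ) × (Fin n → ℝ) => W₃ ev.1 ev.2) ∧
      W₃ 0 0 = 0 ∧
      (∀ e v : Fin n → ℝ, (e, v) ≠ (0, 0) → 0 < W₃ e v) ∧
      ∀ p v : Fin n → ℝ, ∃ u : Fin n → ℝ,
        -((xi - p) ⬝ᵥ (P₁ *ᵥ v)) - v ⬝ᵥ (P₂ᵀ *ᵥ v) +
          ((xi - p) ⬝ᵥ (P₂ *ᵥ (f p v + g p v *ᵥ u)) +
            v ⬝ᵥ (P₃ *ᵥ (f p v + g p v *ᵥ u))) ≤ -W₃ (xi - p) v := by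
  -- basic facts about P₂, P₃
  have hP₂symm : P₂ᵀ = P₂ := by
    have h := hP₂.isHermitian
    rw [Matrix.IsHermitian] at h
    simp only [Matrix.conjTranspose_neg, neg_inj] at h
    simpa using h
  have hP₂det : IsUnit P₂.det := by
    have : IsUnit (-P₂).det := isUnit_iff_ne_zero.mpr (ne_of_gt hP₂.det_pos)
    rw [Matrix.det_neg] at this
    exact isUnit_iff_ne_zero.mpr (by rintro h; simp [h] at this)
  have hP₃symm : P₃ᵀ = P₃ := hP₃
  set M : Matrix (Fin n) (Fin n) ℝ := P₂⁻¹ * P₃ with hM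
  have hMT : Mᵀ = P₃ * P₂⁻¹ := by
    rw [hM, Matrix.transpose_mul, hP₃symm, Matrix.transpose_nonsing_inv, hP₂symm]
  have hP₂M : P₂ * M = P₃ := by
    rw [hM, ← mul_assoc, Matrix.mul_nonsing_inv P₂ hP₂det, one_mul]
  set Q : Matrix (Fin n) (Fin n) ℝ := P₃ * P₂⁻¹ * P₁ - P₂ᵀ with hQ
  -- nonnegativity of self dot product
  have dpsn : ∀ x : Fin n → ℝ, 0 ≤ x ⬝ᵥ x :=
    fun x => Finset.sum_nonneg fun i _ => mul_self_nonneg (x i)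
  have dpsp : ∀ x : Fin n → ℝ, x ≠ 0 → 0 < x ⬝ᵥ x := by
    intro x hx
    exact lt_of_le_of_ne (dpsn x) (fun h => hx (dotProduct_self_eq_zero.mp h.symm))
  refine ⟨fun e v => -(v ⬝ᵥ (Q *ᵥ v)) + (e + M *ᵥ v) ⬝ᵥ (e + M *ᵥ v), ?_, ?_, ?_, ?_⟩
  · simp only [dotProduct, Matrix.mulVec, Pi.add_apply]
    fun_prop
  · simp
  · intro e v hev
    by_cases hv : v = 0
    · have he : e ≠ 0 := by rintro rfl; exact hev (by simp [hv])
      simp only [hv, Matrix.mulVec_zero, dotProduct_zero, add_zero, neg_zero, zero_add]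
      exact dpsp e he
    · have h1 : 0 < -(v ⬝ᵥ (Q *ᵥ v)) := by
        have := hmix v hv
        linarith
      have h2 : 0 ≤ (e + M *ᵥ v) ⬝ᵥ (e + M *ᵥ v) := dpsn _
      show 0 < -(v ⬝ᵥ (Q *ᵥ v)) + (e + M *ᵥ v) ⬝ᵥ (e + M *ᵥ v)
      linarith
  · intro p v
    set e : Fin n → ℝ := xi - p with he
    set d : Fin n → ℝ := e + M *ᵥ v with hd
    set s : Fin n → ℝ := P₂ *ᵥ d with hs
    -- key rewriting: for all w, e⬝(P₂w) + v⬝(P₃w) = s⬝w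
    have hkey : ∀ w : Fin n → ℝ, e ⬝ᵥ (P₂ *ᵥ w) + v ⬝ᵥ (P₃ *ᵥ w) = s ⬝ᵥ w := by
      intro w
      have h1 : s = P₂ᵀ *ᵥ e + P₃ᵀ *ᵥ v := by
        rw [hs, hd, Matrix.mulVec_add, Matrix.mulVec_mulVec, hP₂M, hP₂symm, hP₃symm]
      rw [h1, add_dotProduct]
      congr 1
      · rw [Matrix.mulVec_transpose, ← Matrix.dotProduct_mulVec]
      · rw [Matrix.mulVec_transpose, ← Matrix.dotProduct_mulVec]
    -- achievability of any desired total vector field w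
    have hach : ∀ w : Fin n → ℝ, ∃ u : Fin n → ℝ, f p v + g p v *ᵥ u = w := by
      intro w
      refine ⟨(g p v)⁻¹ *ᵥ (w - f p v), ?_⟩
      rw [Matrix.mulVec_mulVec, Matrix.mul_nonsing_inv _ ((Matrix.isUnit_iff_isUnit_det _).mp (hg p v)),
        Matrix.one_mulVec]
      abel
    by_cases hdz : d = 0
    · obtain ⟨u, hu⟩ := hach 0
      refine ⟨u, ?_⟩
      rw [hu]
      have hev : e = -(M *ᵥ v) := by
        have := hdz
        rw [hd] at this
        linear_combination (norm := module) this
      have he1 : e ⬝ᵥ (P₁ *ᵥ v) = -(v ⬝ᵥ ((P₃ * P₂⁻¹ * P₁) *ᵥ v)) := by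
        rw [hev, neg_dotProduct, ← Matrix.vecMul_transpose, ← Matrix.dotProduct_mulVec,
          Matrix.mulVec_mulVec, hMT]
      have hq : v ⬝ᵥ (Q *ᵥ v) = v ⬝ᵥ ((P₃ * P₂⁻¹ * P₁) *ᵥ v) - v ⬝ᵥ (P₂ᵀ *ᵥ v) := by
        rw [hQ, Matrix.sub_mulVec, dotProduct_sub]
      show -(e ⬝ᵥ (P₁ *ᵥ v)) - v ⬝ᵥ (P₂ᵀ *ᵥ v) + (e ⬝ᵥ (P₂ *ᵥ 0) + v ⬝ᵥ (P₃ *ᵥ 0)) ≤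
        -(-(v ⬝ᵥ (Q *ᵥ v)) + (e + M *ᵥ v) ⬝ᵥ (e + M *ᵥ v))
      rw [← hd, hdz]
      simp only [Matrix.mulVec_zero, dotProduct_zero, add_zero]
      linarith [he1, hq]
    · have hsz : s ≠ 0 := by
        intro h
        apply hdz
        have : P₂⁻¹ *ᵥ s = d := by
          rw [hs, Matrix.mulVec_mulVec, Matrix.nonsing_inv_mul P₂ hP₂det, Matrix.one_mulVec]
        rw [h, Matrix.mulVec_zero] at this
        exact this.symm
      have hss : 0 < s ⬝ᵥ s := dpsp s hsz
      set a : ℝ := e ⬝ᵥ (P₁ *ᵥ v) + v ⬝ᵥ (P₂ᵀ *ᵥ v) with ha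
      set W : ℝ := -(v ⬝ᵥ (Q *ᵥ v)) + d ⬝ᵥ d with hW
      obtain ⟨u, hu⟩ := hach (((a - W) / (s ⬝ᵥ s)) • s)
      refine ⟨u, ?_⟩
      rw [hu, hkey]
      have : s ⬝ᵥ (((a - W) / (s ⬝ᵥ s)) • s) = a - W := by
        rw [dotProduct_smul, smul_eq_mul, div_mul_cancel₀ _ (ne_of_gt hss)]
      rw [this]
      show -(e ⬝ᵥ (P₁ *ᵥ v)) - v ⬝ᵥ (P₂ᵀ *ᵥ v) + (a - W) ≤
        -(-(v ⬝ᵥ (Q *ᵥ v)) + (e + M *ᵥ v) ⬝ᵥ (e + M *ᵥ v))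
      rw [← hd, ← hW]
      linarith [ha.ge, ha.le]
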